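/- Let n ≥ 2 and let τ ∈ ℝⁿ₊. Then there exist a compact set K ⊆ ℝⁿ₊ that is a neighborhood of τ (i.e., τ lies in the interior of K) and a constant c > 0 such that for every measurable set E ⊆ K and every x ∈ K one has b_{ℝⁿ₊}χ_E(x) ≥ c·|E|, where |E| is the Lebesgue measure of E and χ_E is the characteristic function of E. -/

import Mathlib

/-!
On `ℝⁿ₊ × ℝⁿ₊` the kernel `R` is continuous, since there `|x - ȳ| ≥ xₙ + yₙ > 0`, and on the
diagonal `|x - x̄| = 2xₙ`, so `R(x, x)` is a positive multiple of `(n - 1) / (2xₙ)ⁿ > 0`.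
Hence `R ≥ c := R(τ, τ) / 2` on `K × K` for a small compact neighbourhood `K` of `τ`, and
integrating this bound over `E ⊆ K` gives `b χ_E (x) = ∫_E R(x, y) dy ≥ c |E|`.
-/

open MeasureTheory Set

noncomputable section

/-- The last coordinate of a point of `ℝⁿ`. -/
def lastCoord {n : ℕ} (x : EuclideanSpace ℝ (Fin n)) : ℝ :=
  if h : n - 1 < n then x ⟨n - 1, h⟩ else 0

/-- Reflection in the hyperplane `xₙ = 0`: negate the last coordinate. -/
def reflectLast {n : ℕ} (y : EuclideanSpace ℝ (Fin n)) : EuclideanSpace ℝ (Fin n) :=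
  WithLp.toLp 2 fun i => if (i : ℕ) = n - 1 then -y i else y i

/-- The open upper half-space `ℝⁿ₊`. -/
def upperHalfSpace (n : ℕ) : Set (EuclideanSpace ℝ (Fin n)) :=
  {x | 0 < lastCoord x}

/-- The harmonic Bergman kernel of the upper half-space. -/
def harmonicKernel {n : ℕ} (x y : EuclideanSpace ℝ (Fin n)) : ℝ :=
  (2 / Real.pi ^ ((n : ℝ) / 2)) * Real.Gamma ((n : ℝ) / 2) *
    (((n : ℝ) * (lastCoord x + lastCoord y) ^ 2 - ‖x - reflectLast y‖ ^ 2) /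
      ‖x - reflectLast y‖ ^ (n + 2))

/-- The harmonic Bergman projection of the upper half-space. -/
def harmonicBergman {n : ℕ} (f : EuclideanSpace ℝ (Fin n) → ℝ)
    (x : EuclideanSpace ℝ (Fin n)) : ℝ :=
  ∫ y in upperHalfSpace n, harmonicKernel x y * f y

open Function

theorem exists_isCompact_const_mul_measure_le_setIntegral {X : Type*} [TopologicalSpace X]
    [T2Space X] [LocallyCompactSpace X] [MeasurableSpace X] [OpensMeasurableSpace X]
    (μ : Measure X) [IsFiniteMeasureOnCompacts μ] {k : X → X → ℝ} {U : Set X} (hU : IsOpen U)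
    (hk : ContinuousOn (uncurry k) (U ×ˢ U)) {τ : X} (hτU : τ ∈ U) (hτ : 0 < k τ τ) :
    ∃ K ⊆ U, IsCompact K ∧ τ ∈ interior K ∧ ∃ c : ℝ, 0 < c ∧
      ∀ E, MeasurableSet E → E ⊆ K → ∀ x ∈ K, c * (μ E).toReal ≤ ∫ y in E, k x y ∂μ := by
  set c := k τ τ / 2
  have hO : IsOpen (U ×ˢ U ∩ uncurry k ⁻¹' Ioi c) :=
    hk.isOpen_inter_preimage (hU.prod hU) isOpen_Ioi
  obtain ⟨V, W, hV, hW, hτV, hτW, hVW⟩ :=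
    isOpen_prod_iff.mp hO τ τ ⟨⟨hτU, hτU⟩, show c < k τ τ by simp only [c]; linarith⟩
  obtain ⟨K, hKc, hτK, hKVW⟩ := exists_compact_subset (hV.inter hW) ⟨hτV, hτW⟩
  have hKK : K ×ˢ K ⊆ U ×ˢ U ∩ uncurry k ⁻¹' Ioi c :=
    (prod_mono (hKVW.trans inter_subset_left) (hKVW.trans inter_subset_right)).trans hVW
  have hKU : K ⊆ U := fun x hx => (hKK (mk_mem_prod hx hx)).1.1
  refine ⟨K, hKU, hKc, hτK, c, by positivity, fun E hE hEK x hx => ?_⟩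
  have hlower : ∀ y ∈ E, c ≤ k x y := fun y hy => (hKK (mk_mem_prod hx (hEK hy))).2.le
  have hcont : ContinuousOn (k x) K :=
    hk.comp (Continuous.prodMk_right x).continuousOn fun y hy => mk_mem_prod (hKU hx) (hKU hy)
  exact setIntegral_ge_of_const_le_real hE ((measure_mono hEK).trans_lt hKc.measure_lt_top).ne
    hlower ((hcont.integrableOn_compact hKc).mono_set hEK)

@[fun_prop]
theorem continuous_lastCoord {n : ℕ} : Continuous (lastCoord (n := n)) := by
  unfold lastCoord
  split
  · exact PiLp.continuous_apply 2 _ _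
  · exact continuous_const

@[fun_prop]
theorem continuous_reflectLast {n : ℕ} : Continuous (reflectLast (n := n)) := by
  refine (PiLp.continuous_toLp 2 _).comp (continuous_pi fun i => ?_)
  split
  · exact (PiLp.continuous_apply 2 _ i).neg
  · exact PiLp.continuous_apply 2 _ i

theorem isOpen_upperHalfSpace (n : ℕ) : IsOpen (upperHalfSpace n) :=
  isOpen_lt continuous_const continuous_lastCoord

theorem lastCoord_sub {n : ℕ} (x y : EuclideanSpace ℝ (Fin n)) :
    lastCoord (x - y) = lastCoord x - lastCoord y := by
  unfold lastCoord
  split <;> simp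

theorem lastCoord_reflectLast {n : ℕ} (y : EuclideanSpace ℝ (Fin n)) :
    lastCoord (reflectLast y) = -lastCoord y := by
  unfold lastCoord reflectLast
  split <;> simp

theorem norm_sub_reflectLast_self {n : ℕ} (x : EuclideanSpace ℝ (Fin n)) :
    ‖x - reflectLast x‖ = 2 * |lastCoord x| := by
  cases n with
  | zero => simp [lastCoord, EuclideanSpace.norm_eq]
  | succ m =>
    rw [EuclideanSpace.norm_eq, Finset.sum_eq_single (Fin.last m)]
    · simp [reflectLast, lastCoord, Fin.last, ← two_mul]
    · intro i _ hi
      have : (i : ℕ) ≠ m := fun h => hi (Fin.ext h)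
      simp [reflectLast, this]
    · simp

theorem sub_reflectLast_ne_zero {n : ℕ} {x y : EuclideanSpace ℝ (Fin n)}
    (hx : x ∈ upperHalfSpace n) (hy : y ∈ upperHalfSpace n) : x - reflectLast y ≠ 0 := by
  intro h
  have hlast := congrArg lastCoord h
  rw [lastCoord_sub, lastCoord_reflectLast, show lastCoord (0 : EuclideanSpace ℝ (Fin n)) = 0 by
    simp [lastCoord]] at hlast
  have hx' : 0 < lastCoord x := hx
  have hy' : 0 < lastCoord y := hy
  linarith

theorem continuousOn_harmonicKernel (n : ℕ) :
    ContinuousOn (uncurry (harmonicKernel (n := n))) (upperHalfSpace n ×ˢ upperHalfSpace n) := by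
  unfold harmonicKernel
  refine continuousOn_const.mul (ContinuousOn.div (by fun_prop) (by fun_prop) fun p hp => ?_)
  exact pow_ne_zero _ (norm_ne_zero_iff.mpr (sub_reflectLast_ne_zero hp.1 hp.2))

theorem harmonicKernel_self_pos {n : ℕ} (hn : 2 ≤ n) {x : EuclideanSpace ℝ (Fin n)}
    (hx : x ∈ upperHalfSpace n) : 0 < harmonicKernel x x := by
  have hx' : 0 < lastCoord x := hx
  have hn' : (2 : ℝ) ≤ n := by exact_mod_cast hn
  unfold harmonicKernel
  rw [norm_sub_reflectLast_self, abs_of_pos hx']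
  have hC : 0 < Real.Gamma ((n : ℝ) / 2) := Real.Gamma_pos_of_pos (by positivity)
  have hnum : 0 < (n : ℝ) * (lastCoord x + lastCoord x) ^ 2 - (2 * lastCoord x) ^ 2 := by
    nlinarith [mul_pos hx' hx']
  positivity

theorem harmonicBergman_indicator_one {n : ℕ} {E : Set (EuclideanSpace ℝ (Fin n))}
    (hE : MeasurableSet E) (hEU : E ⊆ upperHalfSpace n) (x : EuclideanSpace ℝ (Fin n)) :
    harmonicBergman (E.indicator fun _ => (1 : ℝ)) x = ∫ y in E, harmonicKernel x y := by
  simp_rw [harmonicBergman, ← indicator_mul_right, mul_one]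
  rw [setIntegral_indicator hE, inter_eq_self_of_subset_right hEU]

theorem harmonicBergman_lower_pointwise_bound
    (n : ℕ) (hn : 2 ≤ n) (τ : EuclideanSpace ℝ (Fin n)) (hτ : τ ∈ upperHalfSpace n) :
    ∃ K : Set (EuclideanSpace ℝ (Fin n)), K ⊆ upperHalfSpace n ∧ IsCompact K ∧
      τ ∈ interior K ∧
      ∃ c : ℝ, 0 < c ∧
        ∀ E : Set (EuclideanSpace ℝ (Fin n)), MeasurableSet E → E ⊆ K → ∀ x ∈ K,
          c * (volume E).toReal ≤ harmonicBergman (E.indicator fun _ => (1 : ℝ)) x := by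
  obtain ⟨K, hKU, hK, hτK, c, hc, hbound⟩ :=
    exists_isCompact_const_mul_measure_le_setIntegral volume (isOpen_upperHalfSpace n)
      (continuousOn_harmonicKernel n) hτ (harmonicKernel_self_pos hn hτ)
  refine ⟨K, hKU, hK, hτK, c, hc, fun E hE hEK x hx => ?_⟩
  rw [harmonicBergman_indicator_one hE (hEK.trans hKU)]
  exact hbound E hE hEK x hx

end
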